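/- arXiv:1007.4614 — 3 statements merged into one kernel-verified Lean document; each statement's English description precedes it below -/
import Mathlib

section
/- Proposition 2.5: Fix n ≥ 1 and let C(l,d) denote the condition max(0, 2l − n) ≤ d ≤ l ≤ n, and put δ(l,d) := (l − d)(n − l + d). For nonnegative integers l, d: (i) if C(l,d) is false then τ_{l,d}(x,y) = 0; (ii) if C(l,d) is true then τ_{l,d}(x,y) is a nonzero polynomial whose degree in the variable y equals δ(l,d); (iii) if C(l,d) is true and δ(l,d) > 0, then τ_{l,d}(x,y), viewed as a polynomial in y over ℤ[x], is monic. -/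
open Polynomial in
/-- The Gaussian binomial polynomial
`g_{n,l}(x) = ∏_{i=0}^{l-1}(x^n − x^i) / ∏_{i=0}^{l-1}(x^l − x^i) ∈ ℤ[x]`
for `0 ≤ l ≤ n`, and `0` otherwise.  (The divisor is monic and the division is exact.) -/
noncomputable def gP (n l : ℤ) : Polynomial ℤ :=
  if 0 ≤ l ∧ l ≤ n then
    (∏ i ∈ Finset.range l.toNat, ((X : Polynomial ℤ) ^ n.toNat - X ^ i)) /ₘ
      (∏ i ∈ Finset.range l.toNat, ((X : Polynomial ℤ) ^ l.toNat - X ^ i))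
  else 0

/-- `g_{a,b}(x)`, viewed in `(ℤ[x])[y]` (a polynomial in the first variable `x`). -/
noncomputable def gX (a b : ℤ) : Polynomial (Polynomial ℤ) := Polynomial.C (gP a b)

/-- `g_{a,b}(y)`, viewed in `(ℤ[x])[y]` (a polynomial in the second variable `y`). -/
noncomputable def gY (a b : ℤ) : Polynomial (Polynomial ℤ) := (gP a b).map Polynomial.C

/-- The polynomials `τ_{l,d}(x,y) ∈ ℤ[x,y]` (as elements of `(ℤ[x])[y]`), defined by
descending induction on `(l,d)` in the lexicographic order:  `τ_{l,d} = 0` if `l > n` or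
`d > l`; `τ_{l,l} = g_{n,l}(x)` for `l ≤ n`; and for `d < l ≤ n`,
`τ_{l,d} = Σ_{u=l}^{2l−d} τ_{2l−d,u}·g_{u,l}(y) − Σ_{t=d+1}^{l} τ_{l,t}·g_{n−2l+t,t−d}(y)`. -/
noncomputable def tauP (n : ℕ) (l d : ℕ) : Polynomial (Polynomial ℤ) :=
  if _h : n < l ∨ l < d then 0
  else if _hd : d = l then gX n l
  else
    (∑ u ∈ (Finset.Icc l (2 * l - d)).attach, tauP n (2 * l - d) u.1 * gY u.1 l) -
      ∑ t ∈ (Finset.Icc (d + 1) l).attach,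
        tauP n l t.1 * gY ((n : ℤ) - 2 * l + t.1) ((t.1 : ℤ) - d)
  termination_by (n + 1 - l, l - d)
  decreasing_by
  · apply Prod.Lex.left
    omega
  · apply Prod.Lex.right'
    · omega
    · have := t.2
      rw [Finset.mem_Icc] at this
      omega

/-!
Descending induction on `(l, d)`. For `d < l ≤ n` put `m = 2l − d`. If `m > n` every summand
of the recursion vanishes. Otherwise the summand `τ_{m,u} g_{u,l}(y)` of the first sum is zero
unless `u ≥ 2m − n`, and then has `y`-degree
`δ(m,u) + l(u − l) = δ(l,d) − (u − l)(u + n − 2m)`;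
so exactly one summand, `u = max(l, 2m − n)`, reaches degree `δ(l,d)`, and it is monic. The
summands of the second sum have degree
`δ(l,t) + (t − d)(n − 2l + d) = δ(l,d) − (t − d) t`.
-/

open Polynomial

lemma degree_mul_lt_of_natDegree_add_lt {R : Type*} [Semiring R] {p q : R[X]} {c : ℕ}
    (h : p.natDegree + q.natDegree < c) : (p * q).degree < c :=
  (degree_mul_le p q).trans_lt <|
    (add_le_add degree_le_natDegree degree_le_natDegree).trans_lt (by exact_mod_cast h)

section XPowSubXPow

variable {R : Type*} [CommRing R] [Nontrivial R]

lemma monic_X_pow_sub_X_pow {A i : ℕ} (hi : i < A) : ((X : R[X]) ^ A - X ^ i).Monic :=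
  monic_X_pow_sub (by rw [degree_X_pow]; exact_mod_cast hi)

lemma natDegree_X_pow_sub_X_pow {A i : ℕ} (hi : i < A) :
    ((X : R[X]) ^ A - X ^ i).natDegree = A := by
  rw [natDegree_sub_eq_left_of_natDegree_lt] <;> rw [natDegree_X_pow]
  rwa [natDegree_X_pow]

lemma monic_prod_X_pow_sub_X_pow {A B : ℕ} (hBA : B ≤ A) :
    (∏ i ∈ Finset.range B, ((X : R[X]) ^ A - X ^ i)).Monic :=
  monic_prod_of_monic _ _ fun _ hi ↦ monic_X_pow_sub_X_pow ((Finset.mem_range.1 hi).trans_le hBA)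

lemma natDegree_prod_X_pow_sub_X_pow {A B : ℕ} (hBA : B ≤ A) :
    (∏ i ∈ Finset.range B, ((X : R[X]) ^ A - X ^ i)).natDegree = B * A := by
  rw [natDegree_prod_of_monic _ _ fun i hi ↦
      monic_X_pow_sub_X_pow ((Finset.mem_range.1 hi).trans_le hBA),
    Finset.sum_congr rfl fun i hi ↦
      natDegree_X_pow_sub_X_pow ((Finset.mem_range.1 hi).trans_le hBA),
    Finset.sum_const, Finset.card_range, smul_eq_mul]

end XPowSubXPow

section GaussianPolynomial

variable {a b : ℤ}

lemma gP_of_not_le (h : ¬(0 ≤ b ∧ b ≤ a)) : gP a b = 0 := if_neg h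

lemma gP_monic_and_natDegree (hb : 0 ≤ b) (hba : b ≤ a) :
    (gP a b).Monic ∧ ((gP a b).natDegree : ℤ) = b * (a - b) := by
  have hBA : b.toNat ≤ a.toNat := Int.toNat_le_toNat hba
  have hnum := monic_prod_X_pow_sub_X_pow (R := ℤ) hBA
  have hden := monic_prod_X_pow_sub_X_pow (R := ℤ) (le_refl b.toNat)
  rw [gP, if_pos ⟨hb, hba⟩]
  constructor
  · refine (leadingCoeff_divByMonic_of_monic hden ?_).trans hnum.leadingCoeff
    rw [degree_eq_natDegree hnum.ne_zero, degree_eq_natDegree hden.ne_zero,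
      natDegree_prod_X_pow_sub_X_pow hBA, natDegree_prod_X_pow_sub_X_pow le_rfl]
    exact_mod_cast Nat.mul_le_mul_left _ hBA
  · rw [natDegree_divByMonic _ hden, natDegree_prod_X_pow_sub_X_pow hBA,
      natDegree_prod_X_pow_sub_X_pow le_rfl, ← Nat.mul_sub, Nat.cast_mul,
      Nat.cast_sub hBA, Int.toNat_of_nonneg hb, Int.toNat_of_nonneg (hb.trans hba)]

lemma gP_self (ha : 0 ≤ a) : gP a a = 1 := by
  obtain ⟨hmonic, hdeg⟩ := gP_monic_and_natDegree ha le_rfl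
  exact eq_one_of_monic_natDegree_zero hmonic (by simpa using hdeg)

lemma gY_of_not_le (h : ¬(0 ≤ b ∧ b ≤ a)) : gY a b = 0 := by
  rw [gY, gP_of_not_le h, Polynomial.map_zero]

lemma gY_monic_and_natDegree (hb : 0 ≤ b) (hba : b ≤ a) :
    (gY a b).Monic ∧ ((gY a b).natDegree : ℤ) = b * (a - b) := by
  obtain ⟨hmonic, hdeg⟩ := gP_monic_and_natDegree hb hba
  exact ⟨hmonic.map C, by rw [gY, hmonic.natDegree_map, hdeg]⟩

end GaussianPolynomial

lemma tauP_of_lt {n l d : ℕ} (h : n < l ∨ l < d) : tauP n l d = 0 := by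
  rw [tauP, dif_pos h]

lemma tauP_self {n l : ℕ} (h : l ≤ n) : tauP n l l = gX n l := by
  rw [tauP, dif_neg (by omega), dif_pos rfl]

lemma tauP_eq_sum_sub_sum {n l d : ℕ} (hln : l ≤ n) (hdl : d < l) :
    tauP n l d =
      (∑ u ∈ Finset.Icc l (2 * l - d), tauP n (2 * l - d) u * gY u l) -
        ∑ t ∈ Finset.Icc (d + 1) l,
          tauP n l t * gY ((n : ℤ) - 2 * l + t) ((t : ℤ) - d) := by
  rw [tauP, dif_neg (by omega), dif_neg (by omega),
    Finset.sum_attach _ (fun u ↦ tauP n (2 * l - d) u * gY u l),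
    Finset.sum_attach _ (fun t ↦ tauP n l t * gY ((n : ℤ) - 2 * l + t) ((t : ℤ) - d))]

/-- The condition `C(l,d)`. -/
def TauSupport (n l d : ℕ) : Prop := (2 * l : ℤ) - n ≤ d ∧ d ≤ l ∧ l ≤ n

theorem tauP_eq_zero_of_not_tauSupport {n l d : ℕ} (h : ¬TauSupport n l d) : tauP n l d = 0 := by
  by_cases htriv : n < l ∨ l < d
  · exact tauP_of_lt htriv
  have hd : (d : ℤ) < 2 * l - n := by unfold TauSupport at h; omega
  rw [tauP_eq_sum_sub_sum (by omega) (by omega), Finset.sum_eq_zero, Finset.sum_eq_zero, sub_zero]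
  · intro t ht
    obtain ⟨hdt, htl⟩ := Finset.mem_Icc.mp ht
    by_cases hzt : (t : ℤ) < 2 * l - n
    · rw [tauP_eq_zero_of_not_tauSupport (d := t) (by unfold TauSupport; omega), zero_mul]
    · -- `t - d > n - 2l + t` since `d < 2l - n`
      rw [gY_of_not_le (by omega), mul_zero]
  · intro u _
    rw [tauP_of_lt (Or.inl (by omega)), zero_mul]
termination_by l - d
decreasing_by omega

theorem tauP_mul_gY_max_monic_and_natDegree {n l d m : ℕ} (hC : TauSupport n l d)
    (hdl : d < l) (hm : m + d = 2 * l)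
    (ih_next : ∀ u, TauSupport n m u →
      ((tauP n m u).natDegree : ℤ) = (m - u) * (n - m + u) ∧ (u < m → (tauP n m u).Monic)) :
    (tauP n m (max l (2 * m - n)) * gY (max l (2 * m - n) : ℕ) l).Monic ∧
      ((tauP n m (max l (2 * m - n)) * gY (max l (2 * m - n) : ℕ) l).natDegree : ℤ) =
        (l - d) * (n - l + d) := by
  obtain ⟨hCd, -, hln⟩ := hC
  set u₀ := max l (2 * m - n)
  obtain ⟨hdeg₀, hmonic_of_lt⟩ := ih_next u₀ ⟨by omega, by omega, by omega⟩
  have hmonic₀ : (tauP n m u₀).Monic := by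
    rcases (show u₀ < m ∨ u₀ = m ∧ m = n by omega) with h | ⟨h, hm_eq⟩
    · exact hmonic_of_lt h
    · rw [h, hm_eq, tauP_self le_rfl, gX, gP_self (by omega), map_one]
      exact monic_one
  obtain ⟨hgmonic₀, hgdeg₀⟩ :=
    gY_monic_and_natDegree (a := u₀) (b := l) (by omega) (by omega)
  refine ⟨hmonic₀.mul hgmonic₀, ?_⟩
  rw [hmonic₀.natDegree_mul hgmonic₀, Nat.cast_add, hdeg₀, hgdeg₀]
  rcases (show (u₀ : ℤ) = l ∨ (u₀ : ℤ) = 2 * m - n by omega) with h | h <;>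
    rw [h, show (m : ℤ) = 2 * l - d by omega] <;> ring

theorem tauP_monic_and_natDegree_of_lt {n l d m : ℕ} (hC : TauSupport n l d) (hdl : d < l)
    (hm : m + d = 2 * l)
    (ih_next : ∀ u, TauSupport n m u →
      ((tauP n m u).natDegree : ℤ) = (m - u) * (n - m + u) ∧ (u < m → (tauP n m u).Monic))
    (ih_row : ∀ t, d < t → t ≤ l → ((tauP n l t).natDegree : ℤ) = (l - t) * (n - l + t)) :
    (tauP n l d).Monic ∧ ((tauP n l d).natDegree : ℤ) = (l - d) * (n - l + d) := by
  obtain ⟨hlead, hlead_deg⟩ := tauP_mul_gY_max_monic_and_natDegree hC hdl hm ih_next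
  obtain ⟨hCd, -, hln⟩ := hC
  have hm' : (m : ℤ) = 2 * l - d := by omega
  set u₀ := max l (2 * m - n)
  set lead := tauP n m u₀ * gY u₀ l
  have hfirst : ∀ u ∈ Finset.Icc l m \ {u₀},
      tauP n m u * gY u l ∈ degreeLT ℤ[X] lead.natDegree := by
    intro u hu
    simp only [Finset.mem_sdiff, Finset.mem_Icc, Finset.mem_singleton] at hu
    by_cases hCu : TauSupport n m u
    · have hu_ge := hCu.1
      obtain ⟨-, hgdeg⟩ := gY_monic_and_natDegree (a := u) (b := l) (by omega) (by omega)
      rw [mem_degreeLT]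
      apply degree_mul_lt_of_natDegree_add_lt
      zify
      rw [(ih_next u hCu).1, hgdeg, hlead_deg, hm']
      have hul : (0 : ℤ) < u - l := by omega
      have hun : (0 : ℤ) < u + n - 2 * (2 * l - d) := by omega
      linarith [mul_pos hul hun]
    · rw [tauP_eq_zero_of_not_tauSupport hCu, zero_mul]
      exact zero_mem _
  have hsecond : ∀ t ∈ Finset.Icc (d + 1) l,
      tauP n l t * gY ((n : ℤ) - 2 * l + t) ((t : ℤ) - d) ∈
        degreeLT ℤ[X] lead.natDegree := by
    intro t ht
    obtain ⟨hdt, htl⟩ := Finset.mem_Icc.mp ht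
    obtain ⟨-, hgdeg⟩ :=
      gY_monic_and_natDegree (a := (n : ℤ) - 2 * l + t) (b := (t : ℤ) - d) (by omega) (by omega)
    rw [mem_degreeLT]
    apply degree_mul_lt_of_natDegree_add_lt
    zify
    rw [ih_row t (by omega) htl, hgdeg, hlead_deg]
    have htd : (0 : ℤ) < t - d := by omega
    linarith [mul_pos htd (show (0 : ℤ) < t by omega)]
  have hrest := mem_degreeLT.mp <| sub_mem (sum_mem hfirst) (sum_mem hsecond)
  rw [← degree_eq_natDegree hlead.ne_zero] at hrest
  rw [tauP_eq_sum_sub_sum hln hdl, show 2 * l - d = m by omega,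
    Finset.sum_eq_sum_sdiff_singleton_add
      (show u₀ ∈ Finset.Icc l m from Finset.mem_Icc.mpr ⟨le_max_left _ _, by omega⟩),
    add_sub_right_comm, add_comm]
  exact ⟨hlead.add_of_left hrest, by rw [natDegree_add_eq_left_of_degree_lt hrest, hlead_deg]⟩

theorem tauP_natDegree_and_monic {n l d : ℕ} (h : TauSupport n l d) :
    ((tauP n l d).natDegree : ℤ) = (l - d) * (n - l + d) ∧ (d < l → (tauP n l d).Monic) := by
  have hln := h.2.2
  rcases h.2.1.eq_or_lt with rfl | hdl
  · simp [tauP_self hln, gX]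
  · obtain ⟨hmonic, hdeg⟩ := tauP_monic_and_natDegree_of_lt h hdl (m := 2 * l - d) (by omega)
      (fun u hu ↦ tauP_natDegree_and_monic hu)
      (fun t hdt htl ↦ (tauP_natDegree_and_monic ⟨by have := h.1; omega, htl, hln⟩).1)
    exact ⟨hdeg, fun _ ↦ hmonic⟩
termination_by (n + 1 - l, l - d)
decreasing_by
  · apply Prod.Lex.left
    omega
  · apply Prod.Lex.right'
    · omega
    · omega

theorem tau_degree_monic_general (n : ℕ) (l d : ℕ) :
    (¬ ((2 * l : ℤ) - n ≤ d ∧ d ≤ l ∧ l ≤ n) → tauP n l d = 0) ∧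
    (((2 * l : ℤ) - n ≤ d ∧ d ≤ l ∧ l ≤ n) →
      tauP n l d ≠ 0 ∧ (tauP n l d).natDegree = (l - d) * (n - l + d)) ∧
    ((((2 * l : ℤ) - n ≤ d ∧ d ≤ l ∧ l ≤ n) ∧ 0 < (l - d) * (n - l + d)) →
      (tauP n l d).Monic) := by
  refine ⟨tauP_eq_zero_of_not_tauSupport, fun h ↦ ⟨?_, ?_⟩, fun ⟨h, hδ⟩ ↦ ?_⟩
  · rcases h.2.1.eq_or_lt with rfl | hdl
    · rw [tauP_self h.2.2, gX, Ne, C_eq_zero]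
      exact (gP_monic_and_natDegree (by omega) (by omega)).1.ne_zero
    · exact ((tauP_natDegree_and_monic h).2 hdl).ne_zero
  · zify [h.2.1, h.2.2]
    exact (tauP_natDegree_and_monic h).1
  · exact (tauP_natDegree_and_monic h).2 (Nat.sub_pos_iff_lt.mp (Nat.pos_of_mul_pos_right hδ))

/-- **Proposition 2.5.**  Let `C(l,d)` be the condition `max(0, 2l − n) ≤ d ≤ l ≤ n` and put
`δ(l,d) = (l − d)(n − l + d)`.  If `C(l,d)` fails then `τ_{l,d} = 0`; if `C(l,d)` holds then
`τ_{l,d}` is nonzero of degree `δ(l,d)` in `y`; and if moreover `δ(l,d) > 0` then `τ_{l,d}`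
is monic as a polynomial in `y` over `ℤ[x]`. -/
theorem tau_degree_monic (n : ℕ) (hn : 1 ≤ n) (l d : ℕ) :
    (¬ ((2 * l : ℤ) - n ≤ d ∧ d ≤ l ∧ l ≤ n) → tauP n l d = 0) ∧
    (((2 * l : ℤ) - n ≤ d ∧ d ≤ l ∧ l ≤ n) →
      tauP n l d ≠ 0 ∧ (tauP n l d).natDegree = (l - d) * (n - l + d)) ∧
    ((((2 * l : ℤ) - n ≤ d ∧ d ≤ l ∧ l ≤ n) ∧ 0 < (l - d) * (n - l + d)) →
      (tauP n l d).Monic) :=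
  tau_degree_monic_general n l d
end

section
/- Introductory surface count (n = 3): Let p be a prime and r = p^a, s = p^b with a, b ≥ 0 not both 0; put q := rs. Then for every positive integer ν, the number of pairs (L, M) of F_{q^ν}-subspaces of F_{q^ν}^3 with dim L = 1, dim M = 2, L^r ⊆ M and L ⊆ M^s is equal to q^{2ν} + (q^2 + q + 2)·q^ν + 1. -/
/-- The `p^e`-th power ring homomorphism (iterated Frobenius) on a field of characteristic `p`. -/
noncomputable def frobHom (F : Type*) [Field F] (p : ℕ) [Fact p.Prime] [CharP F p] (e : ℕ) :
    F →+* F where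
  toFun x := x ^ p ^ e
  map_one' := one_pow _
  map_mul' x y := mul_pow x y _
  map_zero' := zero_pow (pow_ne_zero e (Fact.out : p.Prime).ne_zero)
  map_add' x y := add_pow_char_pow x y p e

instance (F : Type*) [Field F] [Finite F] (p : ℕ) [Fact p.Prime] [CharP F p] (e : ℕ) :
    RingHomSurjective (frobHom F p e) :=
  ⟨Finite.injective_iff_surjective.mp (frobHom F p e).injective⟩

/-- The coordinatewise `p^e`-th power map on `Fin n → F`, as a semilinear map over `frobHom`. -/
noncomputable def frobLin (F : Type*) [Field F] (p : ℕ) [Fact p.Prime] [CharP F p] (e n : ℕ) :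
    (Fin n → F) →ₛₗ[frobHom F p e] (Fin n → F) where
  toFun a := fun i => a i ^ p ^ e
  map_add' a b := funext fun i => add_pow_char_pow (a i) (b i) p e
  map_smul' c a := funext fun i => by
    simp [frobHom, mul_pow, Pi.smul_apply, smul_eq_mul]

/-- `L^q` for `q = p^e`: the image of the subspace `L ⊆ F^n` under the coordinatewise
`q`-th power (Frobenius) map; it is again an `F`-subspace. -/
noncomputable def frobSub (F : Type*) [Field F] [Finite F] (p : ℕ) [Fact p.Prime] [CharP F p]
    (e n : ℕ) (L : Submodule F (Fin n → F)) : Submodule F (Fin n → F) :=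
  L.map (frobLin F p e n)


/-! Write `Q = q^ν = |F|`. Since `x ↦ x^Q` is the identity of `F`, the condition `L ⊆ M^s` is
equivalent to `L^{Q/s} ⊆ M`, so `M` must contain the two lines `L^r` and
`L^{Q/s} = (L^r)^{Q/q}`. They coincide exactly when `L` is fixed by the `q`-Frobenius, and then
`M` is any of the `Q + 1` planes through that line; otherwise `M` is the plane they span.
A Frobenius-fixed line is spanned by a fixed vector (scale one coordinate to `1`), i.e. a vector
with coordinates in `𝔽_q`, so there are `q² + q + 1` fixed lines among the `Q² + Q + 1` lines,
and the count is `(Q² + Q + 1) + Q (q² + q + 1)`. -/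

open Submodule Module

lemma Nat.card_eq_mul_of_card_fiber_eq {α β : Type*} [Finite α] [Finite β] (f : α → β)
    {k : ℕ} (h : ∀ y, Nat.card {x // f x = y} = k) : Nat.card α = Nat.card β * k := by
  have := Fintype.ofFinite β
  rw [← Nat.card_congr (Equiv.sigmaFiberEquiv f), Nat.card_sigma]
  simp [h, Nat.card_eq_fintype_card, mul_comm]

lemma Nat.card_ne_zero_and_add_one {α : Type*} [Finite α] [Zero α] {P : α → Prop} (h0 : P 0) :
    Nat.card {x // x ≠ 0 ∧ P x} + 1 = Nat.card {x // P x} := by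
  classical
  have := Fintype.ofFinite α
  simp only [Nat.card_eq_fintype_card, Fintype.card_subtype]
  rw [← Finset.card_erase_add_one (s := {x | P x}) (a := 0) (by simpa using h0)]
  congr 2
  ext x
  simp

lemma FiniteField.card_pow_eq_self (F : Type*) [Field F] [Finite F] {k : ℕ} (hk : k ≠ 0) :
    Nat.card {x : F // x ^ k = x} = (Nat.card F - 1).gcd (k - 1) + 1 := by
  have hx : ∀ x : F, x ≠ 0 → (x ^ k = x ↔ x ^ (k - 1) = 1) := fun x hx => by
    conv_lhs => rw [← Nat.sub_add_cancel (Nat.one_le_iff_ne_zero.2 hk), pow_succ]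
    exact ⟨fun h => mul_left_cancel₀ hx (by rw [mul_comm, h, mul_one]),
      fun h => by rw [h, one_mul]⟩
  let e : (powMonoidHom (k - 1) : Fˣ →* Fˣ).ker ≃ {x : F // x ≠ 0 ∧ x ^ k = x} :=
    { toFun u := ⟨u.1, u.1.ne_zero, (hx _ u.1.ne_zero).2 (by
        simpa [Units.ext_iff] using (MonoidHom.mem_ker.1 u.2))⟩
      invFun x := ⟨Units.mk0 x.1 x.2.1, MonoidHom.mem_ker.2 (by
        simpa [Units.ext_iff] using (hx _ x.2.1).1 x.2.2)⟩
      left_inv u := by ext; simp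
      right_inv x := by ext; simp }
  rw [← Nat.card_ne_zero_and_add_one (by simp [zero_pow hk]), ← Nat.card_congr e,
    IsCyclic.card_powMonoidHom_ker, Nat.card_units]

lemma FiniteField.card_pow_eq_self_of_card_eq_pow (F : Type*) [Field F] [Finite F] {q ν : ℕ}
    (hq : q ≠ 0) (hF : Nat.card F = q ^ ν) : Nat.card {x : F // x ^ q = x} = q := by
  rw [card_pow_eq_self F hq, hF, Nat.gcd_eq_right (Nat.sub_one_dvd_pow_sub_one q ν)]
  omega

section Lines

variable {K V : Type*} [Field K] [AddCommGroup V] [Module K V]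

lemma card_lines_of_finrank [Finite K] {n : ℕ} (h : finrank K V = n) :
    Nat.card {L : Submodule K V // finrank K L = 1} = ∑ i ∈ Finset.range n, Nat.card K ^ i :=
  (Nat.card_congr (Projectivization.equivSubmodule K V)).symm.trans
    (Projectivization.card_of_finrank K V h)

lemma finrank_map_mkQ_add_finrank [FiniteDimensional K V] {L M : Submodule K V} (h : L ≤ M) :
    finrank K (M.map L.mkQ) + finrank K L = finrank K M := by
  have hrange : LinearMap.range (L.mkQ ∘ₗ M.subtype) = M.map L.mkQ := by
    rw [LinearMap.range_comp, range_subtype]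
  have hker : LinearMap.ker (L.mkQ ∘ₗ M.subtype) = L.comap M.subtype := by
    rw [LinearMap.ker_comp, ker_mkQ]
  have := LinearMap.finrank_range_add_finrank_ker (L.mkQ ∘ₗ M.subtype)
  rwa [hrange, hker, (comapSubtypeEquivOfLe h).finrank_eq] at this

def equivLinesQuotient [FiniteDimensional K V] (L : Submodule K V) :
    {M : Submodule K V // finrank K M = finrank K L + 1 ∧ L ≤ M} ≃
      {H : Submodule K (V ⧸ L) // finrank K H = 1} where
  toFun M := ⟨M.1.map L.mkQ, by have := finrank_map_mkQ_add_finrank M.2.2; omega⟩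
  invFun H := ⟨H.1.comap L.mkQ, by
      have h := finrank_map_mkQ_add_finrank (le_comap_mkQ L H.1)
      rw [map_comap_eq_self (by simp), H.2] at h
      omega, le_comap_mkQ L H.1⟩
  left_inv M := Subtype.ext ((comap_map_mkQ L M.1).trans (sup_eq_right.2 M.2.2))
  right_inv H := Subtype.ext (map_comap_eq_self (by simp))

lemma card_finrank_succ_of_le [Finite K] [FiniteDimensional K V] (L : Submodule K V) :
    Nat.card {M : Submodule K V // finrank K M = finrank K L + 1 ∧ L ≤ M} =
      ∑ i ∈ Finset.range (finrank K V - finrank K L), Nat.card K ^ i := by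
  rw [Nat.card_congr (equivLinesQuotient L), card_lines_of_finrank (finrank_quotient L)]

lemma finrank_sup_of_ne [FiniteDimensional K V] {L₁ L₂ : Submodule K V}
    (h₁ : finrank K L₁ = 1) (h₂ : finrank K L₂ = 1) (hne : L₁ ≠ L₂) :
    finrank K ↥(L₁ ⊔ L₂) = 2 := by
  have hlt : L₁ ⊓ L₂ < L₁ := inf_le_left.lt_of_ne fun h =>
    hne (eq_of_le_of_finrank_le (inf_eq_left.1 h) (by rw [h₁, h₂]))
  have := finrank_lt_finrank_of_lt hlt
  have := finrank_sup_add_finrank_inf_eq L₁ L₂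
  omega

lemma card_planes_containing_lines [Finite K] [FiniteDimensional K V] {L₁ L₂ : Submodule K V}
    (h₁ : finrank K L₁ = 1) (h₂ : finrank K L₂ = 1) :
    Nat.card {M : Submodule K V // finrank K M = 2 ∧ L₁ ≤ M ∧ L₂ ≤ M} =
      if L₁ = L₂ then ∑ i ∈ Finset.range (finrank K V - 1), Nat.card K ^ i else 1 := by
  split_ifs with hL
  · subst hL
    rw [← h₁, ← card_finrank_succ_of_le L₁, h₁]
    exact Nat.card_congr (Equiv.subtypeEquivRight fun M => by simp)
  · rw [Nat.card_eq_one_iff_unique]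
    have hsup := finrank_sup_of_ne h₁ h₂ hL
    have hunique : ∀ M : {M : Submodule K V // finrank K M = 2 ∧ L₁ ≤ M ∧ L₂ ≤ M},
        L₁ ⊔ L₂ = M.1 := fun M =>
      eq_of_le_of_finrank_le (sup_le M.2.2.1 M.2.2.2) (by rw [hsup, M.2.1])
    exact ⟨⟨fun M M' => Subtype.ext ((hunique M).symm.trans (hunique M'))⟩,
      ⟨⟨L₁ ⊔ L₂, hsup, le_sup_left, le_sup_right⟩⟩⟩

end Lines

lemma exists_ne_zero_eq_span_singleton {K V : Type*} [Field K] [AddCommGroup V] [Module K V]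
    {L : Submodule K V} (h : finrank K L = 1) : ∃ v ≠ 0, L = K ∙ v :=
  ⟨_, (Projectivization.mk'' L h).rep_nonzero, by
    rw [← Projectivization.submodule_eq, Projectivization.submodule_mk'']⟩

section Frobenius

variable {F : Type*} [Field F] {p : ℕ} [Fact p.Prime] [CharP F p] {n : ℕ}

lemma frobHom_apply (e : ℕ) (x : F) : frobHom F p e x = x ^ p ^ e := rfl

lemma frobLin_apply (e : ℕ) (v : Fin n → F) (i : Fin n) :
    frobLin F p e n v i = v i ^ p ^ e := rfl

lemma frobLin_injective (e : ℕ) : Function.Injective (frobLin F p e n) :=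
  fun _ _ h => funext fun i => (frobHom F p e).injective (congrFun h i)

lemma frobLin_frobLin (e e' : ℕ) (v : Fin n → F) :
    frobLin F p e n (frobLin F p e' n v) = frobLin F p (e' + e) n v :=
  funext fun i => by simp only [frobLin_apply, ← pow_mul, ← pow_add]

lemma frobLin_eq_self_iff (e : ℕ) {v : Fin n → F} :
    frobLin F p e n v = v ↔ ∀ i, v i ^ p ^ e = v i :=
  funext_iff

variable [Fintype F]

lemma frobLin_of_pow_eq_card {N : ℕ} (hN : p ^ N = Fintype.card F) (v : Fin n → F) :
    frobLin F p N n v = v :=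
  funext fun i => by rw [frobLin_apply, hN, FiniteField.pow_card]

lemma frobSub_frobSub (e e' : ℕ) (L : Submodule F (Fin n → F)) :
    frobSub F p e n (frobSub F p e' n L) = frobSub F p (e' + e) n L :=
  SetLike.coe_injective (by simp only [frobSub, map_coe, Set.image_image, frobLin_frobLin])

lemma frobSub_of_pow_eq_card {N : ℕ} (hN : p ^ N = Fintype.card F)
    (L : Submodule F (Fin n → F)) : frobSub F p N n L = L :=
  SetLike.coe_injective (by simp [frobSub, frobLin_of_pow_eq_card hN])

lemma frobSub_injective (e : ℕ) : Function.Injective (frobSub F p e n) :=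
  map_injective_of_injective (frobLin_injective e)

lemma frobSub_mono (e : ℕ) : Monotone (frobSub F p e n) :=
  fun _ _ h => map_mono h

lemma frobSub_span_singleton (e : ℕ) (v : Fin n → F) :
    frobSub F p e n (F ∙ v) = F ∙ frobLin F p e n v := by
  rw [frobSub, map_span, Set.image_singleton]

lemma finrank_frobSub_of_finrank_eq_one (e : ℕ) {L : Submodule F (Fin n → F)}
    (hL : finrank F L = 1) : finrank F (frobSub F p e n L) = 1 := by
  obtain ⟨v, hv, rfl⟩ := exists_ne_zero_eq_span_singleton hL
  rw [frobSub_span_singleton]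
  exact finrank_span_singleton ((map_ne_zero_iff _ (frobLin_injective e)).2 hv)

lemma le_frobSub_iff {b c : ℕ} (hN : p ^ (c + b) = Fintype.card F)
    (L M : Submodule F (Fin n → F)) : L ≤ frobSub F p b n M ↔ frobSub F p c n L ≤ M := by
  constructor
  · intro h
    have := frobSub_mono c h
    rwa [frobSub_frobSub, add_comm, frobSub_of_pow_eq_card hN] at this
  · intro h
    have := frobSub_mono b h
    rwa [frobSub_frobSub, frobSub_of_pow_eq_card hN] at this

lemma frobSub_eq_self_iff_of_add {d e : ℕ} (hN : p ^ (d + e) = Fintype.card F)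
    (L : Submodule F (Fin n → F)) : frobSub F p d n L = L ↔ frobSub F p e n L = L := by
  constructor
  · intro h
    conv_lhs => rw [← h, frobSub_frobSub, frobSub_of_pow_eq_card hN]
  · intro h
    conv_lhs => rw [← h, frobSub_frobSub, add_comm, frobSub_of_pow_eq_card hN]

lemma exists_fixed_generator {e : ℕ} {L : Submodule F (Fin n → F)} (hL : finrank F L = 1)
    (hfix : frobSub F p e n L = L) : ∃ v ≠ 0, frobLin F p e n v = v ∧ L = F ∙ v := by
  obtain ⟨w, hw, rfl⟩ := exists_ne_zero_eq_span_singleton hL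
  obtain ⟨c, hc⟩ : ∃ c : F, c • w = frobLin F p e n w := by
    rw [← mem_span_singleton, ← hfix, frobSub_span_singleton]
    exact mem_span_singleton_self _
  obtain ⟨i, hi⟩ : ∃ i, w i ≠ 0 := Function.ne_iff.1 hw
  have hwi : w i ^ p ^ e = c * w i := by simpa [frobLin_apply] using (congrFun hc i).symm
  have hc0 : c ≠ 0 := by
    rintro rfl
    simp_all
  refine ⟨(w i)⁻¹ • w, smul_ne_zero (inv_ne_zero hi) hw, ?_,
    (span_singleton_smul_eq (IsUnit.mk0 _ (inv_ne_zero hi)) w).symm⟩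
  rw [map_smulₛₗ, ← hc, frobHom_apply, smul_smul, inv_pow, hwi]
  congr 1
  field_simp

lemma card_fixed_lines_mul (e : ℕ) :
    Nat.card {L : Submodule F (Fin n → F) // finrank F L = 1 ∧ frobSub F p e n L = L} *
      (Nat.card {x : F // x ^ p ^ e = x} - 1) = Nat.card {x : F // x ^ p ^ e = x} ^ n - 1 := by
  have hE : p ^ e ≠ 0 := pow_ne_zero _ (Fact.out : p.Prime).ne_zero
  have hfixed : Nat.card {v : Fin n → F // frobLin F p e n v = v} =
      Nat.card {x : F // x ^ p ^ e = x} ^ n := by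
    have coords :
        {v : Fin n → F // frobLin F p e n v = v} ≃ (Fin n → {x : F // x ^ p ^ e = x}) :=
      (Equiv.subtypeEquivRight fun _ => frobLin_eq_self_iff e).trans
        (Equiv.subtypePiEquivPi (p := fun _ x => x ^ p ^ e = x))
    rw [Nat.card_congr coords, Nat.card_fun, Nat.card_fin]
  rw [← hfixed,
    ← Nat.card_ne_zero_and_add_one (P := fun v => frobLin F p e n v = v) (map_zero _),
    ← Nat.card_ne_zero_and_add_one (P := fun x : F => x ^ p ^ e = x) (zero_pow hE),
    Nat.add_sub_cancel, Nat.add_sub_cancel]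
  -- the nonzero fixed vectors fibre over the fixed lines, the fibre over `F ∙ v₀` being the
  -- multiples `c • v₀` with `c ≠ 0`, `c ^ p ^ e = c`
  refine (Nat.card_eq_mul_of_card_fiber_eq (fun v => ⟨F ∙ (v : Fin n → F),
    finrank_span_singleton v.2.1, by rw [frobSub_span_singleton, v.2.2]⟩) fun L => ?_).symm
  obtain ⟨v₀, hv₀, hfix₀, hL⟩ := exists_fixed_generator L.2.1 L.2.2
  refine (Nat.card_eq_of_bijective (fun c => ⟨⟨c.1 • v₀, smul_ne_zero c.2.1 hv₀, by
    rw [map_smulₛₗ, frobHom_apply, c.2.2, hfix₀]⟩, Subtype.ext (by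
      simp [span_singleton_smul_eq (IsUnit.mk0 _ c.2.1), hL])⟩) ⟨?_, ?_⟩).symm
  · intro c c' h
    exact Subtype.ext (smul_left_injective F hv₀ (congrArg (fun t => t.1.1) h))
  · rintro ⟨⟨v, hv0, hvfix⟩, hvL⟩
    have hv : v ∈ F ∙ v₀ := by
      rw [← hL, ← congrArg Subtype.val hvL]
      exact mem_span_singleton_self v
    obtain ⟨c, rfl⟩ := mem_span_singleton.1 hv
    have hc0 : c ≠ 0 := by
      rintro rfl
      simp at hv0
    refine ⟨⟨c, hc0, smul_left_injective F hv₀ ?_⟩, rfl⟩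
    rwa [map_smulₛₗ, frobHom_apply, hfix₀] at hvfix

lemma card_fixed_lines (e : ℕ) :
    Nat.card {L : Submodule F (Fin n → F) // finrank F L = 1 ∧ frobSub F p e n L = L} =
      ∑ i ∈ Finset.range n, Nat.card {x : F // x ^ p ^ e = x} ^ i := by
  have hE : p ^ e ≠ 0 := pow_ne_zero _ (Fact.out : p.Prime).ne_zero
  have h2 : 2 ≤ Nat.card {x : F // x ^ p ^ e = x} :=
    Finite.one_lt_card_iff_nontrivial.2 ⟨⟨0, zero_pow hE⟩, ⟨1, one_pow _⟩, by simp⟩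
  rw [Nat.geomSum_eq h2, eq_comm]
  exact Nat.div_eq_of_eq_mul_left (by omega) (card_fixed_lines_mul e).symm

lemma frobSub_eq_frobSub_add_iff {a b d : ℕ} (hN : p ^ (d + (a + b)) = Fintype.card F)
    (L : Submodule F (Fin n → F)) :
    frobSub F p a n L = frobSub F p (d + a) n L ↔ frobSub F p (a + b) n L = L := by
  rw [← frobSub_frobSub, (frobSub_injective a).eq_iff, eq_comm, frobSub_eq_self_iff_of_add hN]

lemma Fintype.sum_ite_one_add_card {α : Type*} [Fintype α] (c : α → Prop) [DecidablePred c]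
    (P : ℕ) :
    (∑ x, if c x then P else 1) + Nat.card {x // c x} =
      Fintype.card α + Nat.card {x // c x} * P := by
  rw [Finset.sum_ite, Finset.sum_const, Finset.sum_const, smul_eq_mul, smul_eq_mul, mul_one,
    Nat.card_eq_fintype_card, Fintype.card_subtype, ← Finset.card_univ,
    ← Finset.card_filter_add_card_filter_not (s := Finset.univ) c]
  ring

theorem card_flags_add_card_fixed_lines {a b d : ℕ} (hN : p ^ (d + (a + b)) = Fintype.card F) :
    Nat.card {LM : Submodule F (Fin n → F) × Submodule F (Fin n → F) //
        finrank F LM.1 = 1 ∧ finrank F LM.2 = 2 ∧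
        frobSub F p a n LM.1 ≤ LM.2 ∧ LM.1 ≤ frobSub F p b n LM.2} +
      Nat.card {L : Submodule F (Fin n → F) // finrank F L = 1 ∧ frobSub F p (a + b) n L = L} =
    Nat.card {L : Submodule F (Fin n → F) // finrank F L = 1} +
      Nat.card {L : Submodule F (Fin n → F) // finrank F L = 1 ∧ frobSub F p (a + b) n L = L} *
        ∑ i ∈ Finset.range (n - 1), Nat.card F ^ i := by
  classical
  have := Fintype.ofFinite {L : Submodule F (Fin n → F) // finrank F L = 1}
  have hflip : p ^ (d + a + b) = Fintype.card F := by rw [← hN, add_assoc]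
  let flags : {LM : Submodule F (Fin n → F) × Submodule F (Fin n → F) //
        finrank F LM.1 = 1 ∧ finrank F LM.2 = 2 ∧
        frobSub F p a n LM.1 ≤ LM.2 ∧ LM.1 ≤ frobSub F p b n LM.2} ≃
      Σ L : {L : Submodule F (Fin n → F) // finrank F L = 1},
        {M : Submodule F (Fin n → F) // finrank F M = 2 ∧
          frobSub F p a n L ≤ M ∧ frobSub F p (d + a) n L ≤ M} :=
    { toFun s := ⟨⟨s.1.1, s.2.1⟩, s.1.2, s.2.2.1, s.2.2.2.1,
        (le_frobSub_iff hflip _ _).1 s.2.2.2.2⟩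
      invFun z := ⟨(z.1.1, z.2.1), z.1.2, z.2.2.1, z.2.2.2.1,
        (le_frobSub_iff hflip _ _).2 z.2.2.2.2⟩
      left_inv _ := rfl
      right_inv _ := rfl }
  have hplanes (L : {L : Submodule F (Fin n → F) // finrank F L = 1}) :
      Nat.card {M : Submodule F (Fin n → F) // finrank F M = 2 ∧
          frobSub F p a n L ≤ M ∧ frobSub F p (d + a) n L ≤ M} =
        if frobSub F p (a + b) n L = L then ∑ i ∈ Finset.range (n - 1), Nat.card F ^ i
        else 1 := by
    have h₁ := finrank_frobSub_of_finrank_eq_one (p := p) a L.2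
    have h₂ := finrank_frobSub_of_finrank_eq_one (p := p) (d + a) L.2
    rw [card_planes_containing_lines h₁ h₂, finrank_fin_fun]
    exact if_congr (frobSub_eq_frobSub_add_iff hN L.1) rfl rfl
  rw [Nat.card_congr flags, Nat.card_sigma, Fintype.sum_congr _ _ hplanes,
    ← Nat.card_congr
      (Equiv.subtypeSubtypeEquivSubtypeInter _ fun L => frobSub F p (a + b) n L = L),
    Fintype.sum_ite_one_add_card,
    Nat.card_eq_fintype_card (α := {L : Submodule F (Fin n → F) // finrank F L = 1})]

end Frobenius

theorem surface_point_count_general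
    (p : ℕ) [Fact p.Prime] (a b : ℕ) (ν : ℕ)
    (F : Type) [Field F] [Fintype F] [CharP F p]
    (hF : Fintype.card F = (p ^ (a + b)) ^ ν) :
    (Nat.card {LM : Submodule F (Fin 3 → F) × Submodule F (Fin 3 → F) //
        Module.finrank F ↥LM.1 = 1 ∧ Module.finrank F ↥LM.2 = 2 ∧
        frobSub F p a 3 LM.1 ≤ LM.2 ∧ LM.1 ≤ frobSub F p b 3 LM.2} : ℤ) =
      (((p : ℤ) ^ (a + b)) ^ ν) ^ 2 +
        ((((p : ℤ) ^ (a + b)) ^ 2 + (p : ℤ) ^ (a + b) + 2) * ((p : ℤ) ^ (a + b)) ^ ν + 1) := by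
  have hν : ν ≠ 0 := by
    rintro rfl
    exact Fintype.one_lt_card.ne' hF
  have hN : p ^ ((a + b) * (ν - 1) + (a + b)) = Fintype.card F := by
    rw [hF, ← pow_mul, ← Nat.mul_add_one, Nat.sub_add_cancel (Nat.one_le_iff_ne_zero.2 hν)]
  have hq : Nat.card {x : F // x ^ p ^ (a + b) = x} = p ^ (a + b) :=
    FiniteField.card_pow_eq_self_of_card_eq_pow F (pow_ne_zero _ (Fact.out : p.Prime).ne_zero)
      (by rw [Nat.card_eq_fintype_card, hF])
  have hflags := card_flags_add_card_fixed_lines (n := 3) hN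
  rw [card_lines_of_finrank (finrank_fin_fun F), card_fixed_lines, hq] at hflags
  simp only [Finset.sum_range_succ, Finset.sum_range_zero, Nat.card_eq_fintype_card, hF] at hflags
  generalize Nat.card {LM : Submodule F (Fin 3 → F) × Submodule F (Fin 3 → F) // _} = C
    at hflags ⊢
  zify at hflags
  linear_combination hflags

/-- **Introductory surface count (`n = 3`).**  With `q = rs = p^{a+b}`, the number of
pairs `(L,M)` of `F_{q^ν}`-subspaces of `F_{q^ν}^3` with `dim L = 1`, `dim M = 2`,
`L^r ⊆ M` and `L ⊆ M^s` equals `q^{2ν} + (q² + q + 2)·q^ν + 1`. -/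
theorem surface_point_count
    (p : ℕ) [Fact p.Prime] (a b : ℕ) (hab : a ≠ 0 ∨ b ≠ 0) (ν : ℕ) (hν : 0 < ν)
    (F : Type) [Field F] [Fintype F] [CharP F p]
    (hF : Fintype.card F = (p ^ (a + b)) ^ ν) :
    (Nat.card {LM : Submodule F (Fin 3 → F) × Submodule F (Fin 3 → F) //
        Module.finrank F ↥LM.1 = 1 ∧ Module.finrank F ↥LM.2 = 2 ∧
        frobSub F p a 3 LM.1 ≤ LM.2 ∧ LM.1 ≤ frobSub F p b 3 LM.2} : ℤ) =
      (((p : ℤ) ^ (a + b)) ^ ν) ^ 2 +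
        ((((p : ℤ) ^ (a + b)) ^ 2 + (p : ℤ) ^ (a + b) + 2) * ((p : ℤ) ^ (a + b)) ^ ν + 1) :=
  surface_point_count_general p a b ν F hF
end

section
/- Block determinant in the proof of Theorem 5.1: Let n ≥ 4 and let r, s ≥ 1 be integers; put f(n) := 1 + rs + (rs)^2 + … + (rs)^{n−1} and N := f(n) − 1. Let Ã be the (n − 1 + N) × (n − 1 + N) integer matrix whose top-left (n−1) × (n−1) block is A(n−1, s, r, 0) (i.e. entry (i,j) equals s if i + j = n − 1, equals 1 + sr if i + j = n, equals r if i + j = n + 1, and 0 otherwise, for 1 ≤ i, j ≤ n − 1), whose top-right block has entry (i, j) equal to 1 if i = n − 1 and 0 otherwise, whose bottom-left block is the transpose of the top-right block, and whose bottom-right block is (−s)^{n−2} times the N × N identity matrix. Then det à = (−1)^{⌊(n−1)/2⌋}·(−s)^{(n−2)·(f(n)−1)}. -/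
/-- The `m × m` matrix `A(m,u,v,t)` (indices read `1,…,m`): entry `(i,j)` is `u` if
`i + j = m`, `1 + uv` if `i + j = m + 1`, `v` if `i + j = m + 2`, the `(m,m)` entry is `t`,
and all other entries are `0`. -/
def matA {R : Type*} [CommRing R] (m : ℕ) (u v t : R) : Matrix (Fin m) (Fin m) R :=
  Matrix.of fun i j =>
    if i.1 = m - 1 ∧ j.1 = m - 1 then t
    else if i.1 + j.1 + 2 = m then u
    else if i.1 + j.1 + 2 = m + 1 then 1 + u * v
    else if i.1 + j.1 + 2 = m + 2 then v
    else 0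

/-!
Write `Ã = [[A, B], [C, c • 1]]` with `c = (-s)^(n-2)`. Over any commutative ring,
`[[A, B], [C, c • 1]] · diag(c • 1, 1) = diag(1, c • 1) · [[c • A, B], [C, 1]]`, so
`det Ã · c^(n-1) = c^N · det (c • A - B C)`, and `B C` is `N` times the unit matrix at the
bottom-right corner. A determinant is affine in a single entry, with the cofactor as slope.
Reversing the columns of `A(m,u,v,0)` gives the tridiagonal matrix with diagonal `1 + uv` and
off-diagonals `u`, `v`, whose determinant is the continuant `1 + uv + ⋯ + (uv)^m`; reversed in the
same way, the corner minor is lower triangular with diagonal `u`. The two contributions come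
out as `c^(n-1) · ε · f(n)` and `-N · c^(n-1) · ε` with the same sign `ε`, and `f(n) - N = 1`.
-/

open Matrix Finset

theorem neg_one_pow_mul_neg_one_pow_div_two {R : Type*} [Ring R] (k : ℕ) :
    (-1 : R) ^ k * (-1) ^ (k / 2) = (-1) ^ ((k + 1) / 2) := by
  obtain ⟨c, rfl | rfl⟩ := Nat.even_or_odd' k
  · rw [show 2 * c / 2 = c by omega, show (2 * c + 1) / 2 = c by omega, pow_mul]
    simp
  · rw [show (2 * c + 1) / 2 = c by omega, show (2 * c + 1 + 1) / 2 = c + 1 by omega, pow_succ,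
      pow_mul, pow_succ]
    simp [pow_succ]

namespace Matrix

variable {R : Type*} [CommRing R]

theorem det_add_single {n : Type*} [Fintype n] [DecidableEq n] (M : Matrix n n R) (i j : n)
    (t : R) : (M + single i j t).det = M.det + t * adjugate M j i := by
  have hrow : M + single i j t = M.updateRow i (M i + t • Pi.single j 1) := by
    ext k l
    rcases eq_or_ne k i with rfl | hk
    · by_cases hl : l = j
      · subst hl; simp
      · simp [hl, Ne.symm hl]
    · simp [hk, hk.symm]
  rw [hrow, det_updateRow_add, updateRow_eq_self, det_updateRow_smul, adjugate_apply]

theorem det_fromBlocks_smul_one_mul_pow {m n : Type*} [Fintype m] [DecidableEq m] [Fintype n]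
    [DecidableEq n] (A : Matrix m m R) (B : Matrix m n R) (C : Matrix n m R) (c : R) :
    (fromBlocks A B C (c • 1)).det * c ^ Fintype.card m =
      c ^ Fintype.card n * (c • A - B * C).det :=
  calc (fromBlocks A B C (c • 1)).det * c ^ Fintype.card m
      = (fromBlocks A B C (c • 1) * fromBlocks (c • 1) 0 0 1).det := by
        rw [det_mul, det_fromBlocks_zero₂₁, det_smul, det_one, det_one, mul_one, mul_one]
    _ = (fromBlocks 1 0 0 (c • 1) * fromBlocks (c • A) B C 1).det := by
        simp [fromBlocks_multiply]
    _ = c ^ Fintype.card n * (c • A - B * C).det := by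
        rw [det_mul, det_fromBlocks_zero₂₁, det_fromBlocks_one₂₂, det_smul, det_one, det_one,
          one_mul, mul_one]

theorem det_one_submatrix_rev (m : ℕ) :
    ((1 : Matrix (Fin m) (Fin m) R).submatrix id Fin.rev).det = (-1) ^ (m / 2) := by
  induction m with
  | zero => simp
  | succ k ih =>
    rw [det_succ_row_zero, Fintype.sum_eq_single (Fin.last k)]
    · have hminor : ((1 : Matrix (Fin (k + 1)) (Fin (k + 1)) R).submatrix id Fin.rev).submatrix
          Fin.succ (Fin.last k).succAbove = (1 : Matrix (Fin k) (Fin k) R).submatrix id Fin.rev := by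
        ext i j
        simp only [submatrix_apply, id, Fin.succAbove_last, Fin.rev_castSucc, one_apply,
          Fin.succ_inj]
      rw [hminor, ih]
      simpa [one_apply] using neg_one_pow_mul_neg_one_pow_div_two (R := R) k
    · intro j hj
      have : j.rev ≠ 0 := fun h => hj (by rw [← Fin.rev_rev j, h, Fin.rev_zero])
      simp [this.symm]

theorem det_submatrix_rev {m : ℕ} (M : Matrix (Fin m) (Fin m) R) :
    (M.submatrix id Fin.rev).det = (-1) ^ (m / 2) * M.det := by
  have : M.submatrix id Fin.rev = M * (1 : Matrix (Fin m) (Fin m) R).submatrix id Fin.rev :=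
    (mul_submatrix_one (Equiv.refl _) Fin.rev M).symm
  rw [this, det_mul, det_one_submatrix_rev, mul_comm]

end Matrix

section Tridiagonal

variable {R : Type*} [CommRing R]

def tridiag (m : ℕ) (u v : R) : Matrix (Fin m) (Fin m) R :=
  of fun i j =>
    if i.1 = j.1 then 1 + u * v
    else if i.1 + 1 = j.1 then u
    else if j.1 + 1 = i.1 then v
    else 0

theorem tridiag_submatrix_succ (m : ℕ) (u v : R) :
    (tridiag (m + 1) u v).submatrix Fin.succ Fin.succ = tridiag m u v := by
  ext i j
  simp [tridiag]

theorem det_tridiag_add_two (m : ℕ) (u v : R) :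
    (tridiag (m + 2) u v).det =
      (1 + u * v) * (tridiag (m + 1) u v).det - u * v * (tridiag m u v).det := by
  set T := tridiag (m + 2) u v
  have hminor : (T.submatrix Fin.succ (Fin.succAbove 1)).det = v * (tridiag m u v).det := by
    have : (T.submatrix Fin.succ (Fin.succAbove 1)).submatrix (Fin.succAbove 0) Fin.succ =
        tridiag m u v := by
      ext i j
      simp [T, tridiag]
    rw [det_succ_column_zero, Fin.sum_univ_succ, Fintype.sum_eq_zero _ (fun i => by
      simp [T, tridiag]), this]
    simp [T, tridiag]
  rw [det_succ_row_zero, Fin.sum_univ_succ, Fin.sum_univ_succ, Fintype.sum_eq_zero _ (fun j => by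
    simp [T, tridiag])]
  simp [T, tridiag_submatrix_succ, hminor]
  simp [tridiag]
  ring

theorem det_tridiag (m : ℕ) (u v : R) :
    (tridiag m u v).det = ∑ k ∈ range (m + 1), (u * v) ^ k := by
  induction m using Nat.strong_induction_on with
  | _ m ih =>
    match m with
    | 0 => simp
    | 1 => simp [tridiag, sum_range_succ]
    | k + 2 =>
      rw [det_tridiag_add_two, ih (k + 1) (by omega), ih k (by omega), sum_range_succ _ (k + 2),
        sum_range_succ _ (k + 1)]
      ring

theorem matA_zero_eq_submatrix_rev {m : ℕ} (hm : 3 ≤ m) (u v : R) :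
    matA m u v 0 = (tridiag m u v).submatrix id Fin.rev := by
  ext i j
  have := i.isLt
  have := j.isLt
  simp only [matA, tridiag, of_apply, submatrix_apply, id, Fin.val_rev]
  split_ifs <;> first | rfl | omega

theorem det_matA_zero {m : ℕ} (hm : 3 ≤ m) (u v : R) :
    (matA m u v 0).det = (-1) ^ (m / 2) * ∑ k ∈ range (m + 1), (u * v) ^ k := by
  rw [matA_zero_eq_submatrix_rev hm, det_submatrix_rev, det_tridiag]

theorem det_matA_zero_submatrix_castSucc (k : ℕ) (u v : R) :
    ((matA (k + 1) u v 0).submatrix Fin.castSucc Fin.castSucc).det = (-1) ^ (k / 2) * u ^ k := by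
  set L := ((matA (k + 1) u v 0).submatrix Fin.castSucc Fin.castSucc).submatrix id Fin.rev
  have hlower : L.IsLowerTriangular := by
    intro i j (hij : i < j)
    have := j.isLt
    have : i.1 < j.1 := hij
    simp only [L, matA, of_apply, submatrix_apply, id, Fin.val_castSucc, Fin.val_rev]
    split_ifs <;> first | rfl | omega
  have hdiag : ∀ i, L i i = u := by
    intro i
    have := i.isLt
    simp only [L, matA, of_apply, submatrix_apply, id, Fin.val_castSucc, Fin.val_rev]
    split_ifs <;> first | rfl | omega
  rw [show (matA (k + 1) u v 0).submatrix Fin.castSucc Fin.castSucc = L.submatrix id Fin.rev by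
    ext; simp [L], det_submatrix_rev, det_of_isLowerTriangular _ hlower]
  simp [hdiag]

theorem adjugate_matA_zero_apply_last {m : ℕ} (hm : 1 ≤ m) (u v : R) (i : Fin m)
    (hi : i.1 = m - 1) : adjugate (matA m u v 0) i i = (-1) ^ (m / 2) * (-u) ^ (m - 1) := by
  obtain ⟨k, rfl⟩ : ∃ k, m = k + 1 := ⟨m - 1, by omega⟩
  obtain rfl : i = Fin.last k := Fin.ext (by simpa using hi)
  have hsq : (-1 : R) ^ k * (-1) ^ k = 1 := by rw [← mul_pow]; simp
  rw [adjugate_fin_succ_eq_det_submatrix, Fin.succAbove_last, det_matA_zero_submatrix_castSucc,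
    Nat.add_sub_cancel, ← neg_one_pow_mul_neg_one_pow_div_two, neg_pow u, Fin.val_last, ← two_mul,
    pow_mul, neg_one_sq, one_pow, one_mul]
  linear_combination (-((-1 : R) ^ (k / 2) * u ^ k)) * hsq

end Tridiagonal

theorem det_block_matrix_general (n : ℕ) (hn : 4 ≤ n) (r s : ℕ) (hs : 1 ≤ s) :
    (Matrix.fromBlocks
        (matA (n - 1) (s : ℤ) (r : ℤ) 0)
        (Matrix.of fun (i : Fin (n - 1))
            (_ : Fin ((∑ i ∈ Finset.range n, (r * s) ^ i) - 1)) =>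
          if i.1 = n - 2 then (1 : ℤ) else 0)
        (Matrix.of fun (_ : Fin ((∑ i ∈ Finset.range n, (r * s) ^ i) - 1))
            (j : Fin (n - 1)) =>
          if j.1 = n - 2 then (1 : ℤ) else 0)
        ((-(s : ℤ)) ^ (n - 2) •
          (1 : Matrix (Fin ((∑ i ∈ Finset.range n, (r * s) ^ i) - 1))
            (Fin ((∑ i ∈ Finset.range n, (r * s) ^ i) - 1)) ℤ))).det =
      (-1) ^ ((n - 1) / 2) *
        (-(s : ℤ)) ^ ((n - 2) * ((∑ i ∈ Finset.range n, (r * s) ^ i) - 1)) := by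
  set f := ∑ i ∈ Finset.range n, (r * s) ^ i
  set c : ℤ := (-(s : ℤ)) ^ (n - 2)
  set B := Matrix.of fun (i : Fin (n - 1)) (_ : Fin (f - 1)) => if i.1 = n - 2 then (1 : ℤ) else 0
  set C := Matrix.of fun (_ : Fin (f - 1)) (j : Fin (n - 1)) => if j.1 = n - 2 then (1 : ℤ) else 0
  let ℓ : Fin (n - 1) := ⟨n - 2, by omega⟩
  have hf : 1 ≤ f := by
    simpa using single_le_sum (f := fun i => (r * s) ^ i) (fun _ _ => Nat.zero_le _)
      (mem_range.2 (by omega : 0 < n))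
  have hc : c ≠ 0 := pow_ne_zero _ (by simp; omega)
  have hBC : B * C = single ℓ ℓ ((f - 1 : ℕ) : ℤ) := by
    ext i j
    simp only [B, C, ℓ, mul_apply, of_apply, single_apply, Fin.ext_iff, mul_boole, sum_ite_irrel,
      sum_const, card_univ, Fintype.card_fin, nsmul_eq_mul, mul_one]
    split_ifs <;> first | rfl | omega
  apply mul_right_cancel₀ (pow_ne_zero (Fintype.card (Fin (n - 1))) hc)
  rw [det_fromBlocks_smul_one_mul_pow, hBC, sub_eq_add_neg, single_neg, det_add_single,
    adjugate_smul, det_smul, Matrix.smul_apply, det_matA_zero (by omega),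
    adjugate_matA_zero_apply_last (by omega) _ _ ℓ rfl, Fintype.card_fin, Fintype.card_fin,
    smul_eq_mul, pow_mul]
  have hS : ∑ k ∈ range (n - 1 + 1), ((s : ℤ) * r) ^ k = f := by
    rw [Nat.sub_add_cancel (by omega)]
    push_cast [f, mul_comm]
    rfl
  have hN : ((f - 1 : ℕ) : ℤ) = f - 1 := by push_cast [hf]; ring
  have hpow : c ^ (n - 2) * c = c ^ (n - 1) := by rw [← pow_succ]; congr 1; omega
  rw [hS, hN, show n - 1 - 1 = n - 2 by omega]
  linear_combination (-(c ^ (f - 1) * (-1) ^ ((n - 1) / 2) * ((f : ℤ) - 1))) * hpow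

/-- **Block determinant in the proof of Theorem 5.1.**  For `n ≥ 4` and integers
`r, s ≥ 1`, with `f(n) = 1 + rs + ⋯ + (rs)^{n−1}` and `N = f(n) − 1`, the determinant of
the block matrix `Ã` with blocks `A(n−1,s,r,0)`, the 0/1 matrix supported on the last
row, its transpose, and `(−s)^{n−2}·I_N`, equals
`(−1)^{⌊(n−1)/2⌋}·(−s)^{(n−2)(f(n)−1)}`. -/
theorem det_block_matrix (n : ℕ) (hn : 4 ≤ n) (r s : ℕ) (hr : 1 ≤ r) (hs : 1 ≤ s) :
    (Matrix.fromBlocks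
        (matA (n - 1) (s : ℤ) (r : ℤ) 0)
        (Matrix.of fun (i : Fin (n - 1))
            (_ : Fin ((∑ i ∈ Finset.range n, (r * s) ^ i) - 1)) =>
          if i.1 = n - 2 then (1 : ℤ) else 0)
        (Matrix.of fun (_ : Fin ((∑ i ∈ Finset.range n, (r * s) ^ i) - 1))
            (j : Fin (n - 1)) =>
          if j.1 = n - 2 then (1 : ℤ) else 0)
        ((-(s : ℤ)) ^ (n - 2) •
          (1 : Matrix (Fin ((∑ i ∈ Finset.range n, (r * s) ^ i) - 1))
            (Fin ((∑ i ∈ Finset.range n, (r * s) ^ i) - 1)) ℤ))).det =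
      (-1) ^ ((n - 1) / 2) *
        (-(s : ℤ)) ^ ((n - 2) * ((∑ i ∈ Finset.range n, (r * s) ^ i) - 1)) :=
  det_block_matrix_general n hn r s hs
end
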